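/- If the Choi matrix C_φ of a linear map φ : M_a → M_b is positive semidefinite, then φ admits a Kraus decomposition: φ(x) = Σ_i s_i* x s_i for finitely many matrices s_i ∈ M_{a,b}. -/

import Mathlib

/-!
Factor the positive semidefinite Choi matrix as `C_φ = Bᴴ * B`. Reshaping each row of `B` into an
`a × b` matrix `sₘ` gives maps `x ↦ sₘᴴ * x * sₘ` whose sum has Choi matrix exactly `Bᴴ * B`;
since a linear map is determined by its values on matrix units, hence by its Choi matrix, `φ` is
that sum.
-/

open Matrix Kronecker BigOperators
open scoped ComplexOrder

noncomputable def choi {a b : ℕ}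
    (φ : Matrix (Fin a) (Fin a) ℂ →ₗ[ℂ] Matrix (Fin b) (Fin b) ℂ) :
    Matrix (Fin a × Fin b) (Fin a × Fin b) ℂ :=
  ∑ i : Fin a, ∑ j : Fin a,
    (Matrix.single i j (1 : ℂ)) ⊗ₖ φ (Matrix.single i j (1 : ℂ))

noncomputable def tensorMap {a₁ b₁ a₂ b₂ : ℕ}
    (φ₁ : Matrix (Fin a₁) (Fin a₁) ℂ →ₗ[ℂ] Matrix (Fin b₁) (Fin b₁) ℂ)
    (φ₂ : Matrix (Fin a₂) (Fin a₂) ℂ →ₗ[ℂ] Matrix (Fin b₂) (Fin b₂) ℂ)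
    (M : Matrix (Fin a₁ × Fin a₂) (Fin a₁ × Fin a₂) ℂ) :
    Matrix (Fin b₁ × Fin b₂) (Fin b₁ × Fin b₂) ℂ :=
  ∑ i : Fin a₁, ∑ j : Fin a₁,
    (φ₁ (Matrix.single i j (1 : ℂ))) ⊗ₖ
      (φ₂ (Matrix.of fun k l => M (i, k) (j, l)))

noncomputable def adS {a b : ℕ} (s : Matrix (Fin a) (Fin b) ℂ) :
    Matrix (Fin a) (Fin a) ℂ →ₗ[ℂ] Matrix (Fin b) (Fin b) ℂ where
  toFun x := sᴴ * x * s
  map_add' x y := by simp [Matrix.mul_add, Matrix.add_mul]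
  map_smul' c x := by simp [Matrix.mul_smul, Matrix.smul_mul]

noncomputable def pairM {n : Type*} [Fintype n] (x y : Matrix n n ℂ) : ℂ := (x * yᵀ).trace

open scoped MatrixOrder in
lemma Matrix.PosSemidef.exists_eq_conjTranspose_mul_self {n : Type*} [Fintype n] [DecidableEq n]
    {A : Matrix n n ℂ} (hA : A.PosSemidef) : ∃ B : Matrix n n ℂ, A = Bᴴ * B := by
  obtain ⟨B, rfl⟩ := CStarAlgebra.nonneg_iff_eq_star_mul_self.mp hA.nonneg
  exact ⟨B, rfl⟩

lemma conjTranspose_mul_single_one_mul_apply {m n α : Type*} [Fintype m] [DecidableEq m]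
    [Semiring α] [StarRing α] (s : Matrix m n α) (i j : m) (k l : n) :
    (sᴴ * single i j (1 : α) * s) k l = star (s i k) * s j l := by
  simp [mul_apply, single, ite_and, ite_mul]

lemma choi_apply {a b : ℕ}
    (φ : Matrix (Fin a) (Fin a) ℂ →ₗ[ℂ] Matrix (Fin b) (Fin b) ℂ)
    (i j : Fin a) (k l : Fin b) :
    choi φ (i, k) (j, l) = φ (single i j 1) k l := by
  simp [choi, Matrix.sum_apply, single, ite_and]

lemma choi_injective {a b : ℕ} :
    Function.Injective (choi : (Matrix (Fin a) (Fin a) ℂ →ₗ[ℂ] Matrix (Fin b) (Fin b) ℂ) → _) := by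
  intro φ ψ h
  refine Matrix.ext_linearMap (R := ℂ) fun i j => LinearMap.ext_ring ?_
  ext k l
  simpa [choi_apply] using congr_fun₂ h (i, k) (j, l)

lemma adS_single_one_apply {a b : ℕ} (s : Matrix (Fin a) (Fin b) ℂ) (i j : Fin a) (k l : Fin b) :
    adS s (single i j 1) k l = star (s i k) * s j l :=
  conjTranspose_mul_single_one_mul_apply s i j k l

lemma choi_sum_adS {a b : ℕ} {ι : Type*} [Fintype ι] (B : Matrix ι (Fin a × Fin b) ℂ) :
    choi (∑ m, adS (of (Function.curry (B m)))) = Bᴴ * B := by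
  ext ⟨i, k⟩ ⟨j, l⟩
  simp [choi_apply, LinearMap.sum_apply, Matrix.sum_apply, adS_single_one_apply, mul_apply]

/-- If the Choi matrix of `φ` is positive semidefinite, then `φ` has a Kraus
decomposition `φ(x) = ∑ i, sᵢ* x sᵢ`. -/
theorem stmt_10 {a b : ℕ}
    (φ : Matrix (Fin a) (Fin a) ℂ →ₗ[ℂ] Matrix (Fin b) (Fin b) ℂ)
    (h : (choi φ).PosSemidef) :
    ∃ (n : ℕ) (s : Fin n → Matrix (Fin a) (Fin b) ℂ),
      ∀ x : Matrix (Fin a) (Fin a) ℂ, φ x = ∑ i : Fin n, (s i)ᴴ * x * s i := by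
  obtain ⟨B, hB⟩ := h.exists_eq_conjTranspose_mul_self
  have hφ : φ = ∑ m, adS (of (Function.curry (B m))) :=
    choi_injective (by rw [choi_sum_adS, hB])
  refine ⟨a * b, fun m => of (Function.curry (B (finProdFinEquiv.symm m))), fun x => ?_⟩
  rw [hφ, LinearMap.sum_apply]
  exact (finProdFinEquiv.symm.sum_comp fun m => adS (of (Function.curry (B m))) x).symm
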